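/- arXiv:2512.12886 — 3 statements merged into one kernel-verified Lean document; each statement's English description precedes it below -/
import Mathlib

section
/- Let T be a finite TD-unmixed balanced tree. Then the odd-open neighborhood ideal N_odd(T) in the polynomial ring k[x_v : v ∈ V(T)] over a field k is geometrically vertex decomposable. -/
open scoped Classical

section GraphDefs

variable {V : Type} (G : SimpleGraph V)

/-- A leaf is a vertex of degree 1. -/
def IsLeafVx (v : V) : Prop := (G.neighborSet v).ncard = 1

/-- The height of a vertex: the minimum distance to a leaf in its connected
component (`0` if there is no leaf reachable from it, e.g. for isolated vertices). -/
noncomputable def heightVx (v : V) : ℕ :=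
  sInf {n | ∃ l, IsLeafVx G l ∧ G.Reachable v l ∧ G.dist v l = n}

/-- The height of a graph: the maximum height of a vertex. -/
noncomputable def heightGr : ℕ := sSup (Set.range (heightVx G))

/-- A graph is balanced if no two adjacent vertices have the same height. -/
def IsBalanced : Prop := ∀ u w, G.Adj u w → heightVx G u ≠ heightVx G w

/-- The open neighborhood of a set of vertices. -/
def nbhd (S : Set V) : Set V := {u | ∃ v ∈ S, G.Adj v u}

/-- A total dominating set: `N(S) = V`. -/
def IsTDSet (S : Set V) : Prop := nbhd G S = Set.univ

/-- A minimal total dominating set. -/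
def IsMinTDSet (S : Set V) : Prop := IsTDSet G S ∧ ∀ S' ⊂ S, ¬ IsTDSet G S'

/-- A graph is TD-unmixed if all of its minimal total dominating sets have
the same cardinality. -/
def TDUnmixed : Prop :=
  ∀ S₁ S₂ : Set V, IsMinTDSet G S₁ → IsMinTDSet G S₂ → S₁.ncard = S₂.ncard

/-- A forest is TD-unmixed if every connected component is TD-unmixed. -/
def ComponentwiseTDUnmixed : Prop :=
  ∀ c : G.ConnectedComponent, TDUnmixed (G.induce c.supp)

end GraphDefs

section GVDDefs

/-- The squarefree monomial whose support is the finite set `s`. -/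
noncomputable def sqMono (k : Type) [Field k] {σ : Type} (s : Finset σ) : MvPolynomial σ k :=
  ∏ i ∈ s, MvPolynomial.X i

/-- The squarefree monomial ideal generated by the monomials with supports in `F`. -/
noncomputable def sqSpan (k : Type) [Field k] {σ : Type} (F : Set (Finset σ)) :
    Ideal (MvPolynomial σ k) :=
  Ideal.span {m | ∃ s ∈ F, m = sqMono k s}

/-- The height of a prime ideal. -/
noncomputable def primeHt {R : Type*} [CommRing R] (P : Ideal R) (hP : P.IsPrime) : ℕ∞ :=
  Order.height (⟨P, hP⟩ : PrimeSpectrum R)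

/-- An ideal is unmixed if all of its minimal primes have the same height. -/
def UnmixedIdeal {R : Type*} [CommRing R] (I : Ideal R) : Prop :=
  ∀ P Q : Ideal R, ∀ hP : P ∈ I.minimalPrimes, ∀ hQ : Q ∈ I.minimalPrimes,
    primeHt P hP.1.1 = primeHt Q hQ.1.1

/-- View a finset of `σ` as a finset of `{x : σ // x ≠ y}` (dropping `y`). -/
noncomputable def dropVar {σ : Type} (y : σ) (s : Finset σ) : Finset {x : σ // x ≠ y} :=
  s.subtype (· ≠ y)

/-- Supports of the generators of `N_{y,I}`: the given generators not divisible by `y`. -/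
def NFam {σ : Type} (y : σ) (F : Set (Finset σ)) : Set (Finset σ) := {s ∈ F | y ∉ s}

/-- Supports of the generators of `C_{y,I}`: the given generators with `y` divided out
(together with the generators not divisible by `y`). -/
noncomputable def CFam {σ : Type} (y : σ) (F : Set (Finset σ)) : Set (Finset σ) :=
  (fun s => s.erase y) '' F

/-- A squarefree monomial ideal `I` is geometrically vertex decomposable if it is unmixed
and either (1) `I = ⟨1⟩` or `I` is generated by a subset of the variables, or (2) there is
a set of squarefree monomial generators of `I` and a variable `y` such that
`I = C_{y,I} ∩ (N_{y,I} + ⟨y⟩)` and both `C_{y,I}` and `N_{y,I}` are geometrically vertex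
decomposable in the polynomial ring omitting the variable `y`. -/
inductive IsGVD (k : Type) [Field k] : (σ : Type) → Ideal (MvPolynomial σ k) → Prop where
  | base (σ : Type) (I : Ideal (MvPolynomial σ k)) (hunm : UnmixedIdeal I)
      (h : I = ⊤ ∨ ∃ W : Set σ, I = Ideal.span (MvPolynomial.X '' W)) : IsGVD k σ I
  | step (σ : Type) (I : Ideal (MvPolynomial σ k)) (hunm : UnmixedIdeal I)
      (F : Set (Finset σ)) (hgen : I = sqSpan k F) (y : σ)
      (hdec : I = sqSpan k (CFam y F) ⊓ (sqSpan k (NFam y F) ⊔ Ideal.span {MvPolynomial.X y}))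
      (hC : IsGVD k {x : σ // x ≠ y} (sqSpan k (dropVar y '' CFam y F)))
      (hN : IsGVD k {x : σ // x ≠ y} (sqSpan k (dropVar y '' NFam y F))) :
      IsGVD k σ I

end GVDDefs

section ONIDefs

variable {V : Type} [Fintype V]

/-- The open neighborhood of a vertex, as a finset. -/
noncomputable def nbrFinset (G : SimpleGraph V) (v : V) : Finset V :=
  (Set.toFinite (G.neighborSet v)).toFinset

/-- The odd-open neighborhood ideal of a (balanced) graph: generated by the monomials
`X_{N(v)}` for the vertices `v` of odd height. -/
noncomputable def oddONI (k : Type) [Field k] (G : SimpleGraph V) : Ideal (MvPolynomial V k) :=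
  sqSpan k {s | ∃ v : V, Odd (heightVx G v) ∧ s = nbrFinset G v}

end ONIDefs

/-!
The minimal primes of a squarefree monomial ideal `⟨X_s : s ∈ F⟩` are the ideals generated by
the variables of the minimal transversals of the hypergraph `F`; permuting variables, the ideal
is unmixed as soon as all minimal transversals of `F` have the same size. For every variable `y`
the decomposition `I = C_{y,I} ∩ (N_{y,I} + ⟨y⟩)` holds, so only unmixedness has to be
propagated.

In a balanced tree adjacent heights differ by exactly one, so the odd-height vertices `O` form
one side of a bipartition. A total dominating set is then the disjoint union of a transversal of
`{N(v) : v ∈ O}` and one of `{N(v) : v ∉ O}`, which turns TD-unmixedness into unmixedness of the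
hypergraph `{N(v) : v ∈ O}`.

For the induction, take `v ∈ O` farthest from some base vertex and `y` its neighbour towards the
base: every other neighbour of `v` is pendant. Minimal transversals of `C_y` are those of `F`
that avoid `y`, and a minimal transversal `W` of `N_y` gives the minimal transversal `W ∪ {y}`
of `F`. Both `C_y` and `N_y` are again odd-neighbourhood hypergraphs of a forest on the vertices
other than `y`, keeping only the edges at the surviving odd vertices.
-/

open MvPolynomial

section SquarefreeMonomial

variable {k : Type} [Field k] {σ : Type}

lemma sqMono_eq_monomial (s : Finset σ) :
    sqMono k s = monomial (∑ i ∈ s, Finsupp.single i 1) 1 := by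
  rw [monomial_sum_one]; rfl

lemma sum_single_one_le_iff {s : Finset σ} {ξ : σ →₀ ℕ} :
    ∑ i ∈ s, Finsupp.single i 1 ≤ ξ ↔ s ⊆ ξ.support := by
  simp only [Finsupp.le_def, Finsupp.coe_finsetSum, Finset.sum_apply, Finsupp.single_apply,
    Finset.sum_ite_eq', Finset.subset_iff, Finsupp.mem_support_iff]
  constructor
  · intro h i hi
    have := h i
    rw [if_pos hi] at this
    omega
  · intro h i
    split_ifs with hi
    · exact Nat.one_le_iff_ne_zero.mpr (h hi)
    · exact Nat.zero_le _

lemma mem_sqSpan_iff {F : Set (Finset σ)} {f : MvPolynomial σ k} :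
    f ∈ sqSpan k F ↔ ∀ ξ ∈ f.support, ∃ s ∈ F, s ⊆ ξ.support := by
  have : sqSpan k F = Ideal.span ((fun d => monomial d (1 : k)) ''
      ((fun s : Finset σ => ∑ i ∈ s, Finsupp.single i 1) '' F)) := by
    rw [sqSpan, Set.image_image]
    congr 1
    ext m
    simp [sqMono_eq_monomial, eq_comm]
  simp [this, mem_ideal_span_monomial_image, sum_single_one_le_iff]

lemma sqMono_mem_sqSpan {F : Set (Finset σ)} {s : Finset σ} (hs : s ∈ F) :
    sqMono k s ∈ sqSpan k F :=
  Ideal.subset_span ⟨s, hs, rfl⟩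

lemma sqSpan_eq_top_of_empty_mem {F : Set (Finset σ)} (h : ∅ ∈ F) : sqSpan k F = ⊤ :=
  (Ideal.eq_top_iff_one _).mpr (by simpa [sqMono] using sqMono_mem_sqSpan (k := k) h)

lemma sqSpan_le_sqSpan {F F' : Set (Finset σ)} (h : ∀ s ∈ F, ∃ t ∈ F', t ⊆ s) :
    sqSpan k F ≤ sqSpan k F' := by
  rw [sqSpan, Ideal.span_le]
  rintro _ ⟨s, hs, rfl⟩
  obtain ⟨t, ht, hts⟩ := h s hs
  exact Ideal.mem_of_dvd _ (Finset.prod_dvd_prod_of_subset t s _ hts) (sqMono_mem_sqSpan ht)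

lemma span_X_eq_sqSpan (y : σ) : Ideal.span {X y} = sqSpan k {{y}} := by
  simp [sqSpan, sqMono]

lemma sqSpan_CFam_inf_span_X_le (F : Set (Finset σ)) (y : σ) :
    sqSpan k (CFam y F) ⊓ Ideal.span {X y} ≤ sqSpan k F := by
  rintro f ⟨hC, hy⟩
  rw [SetLike.mem_coe, span_X_eq_sqSpan, mem_sqSpan_iff] at hy
  rw [SetLike.mem_coe, mem_sqSpan_iff] at hC
  rw [mem_sqSpan_iff]
  intro ξ hξ
  obtain ⟨_, ⟨s, hs, rfl⟩, hsξ⟩ := hC ξ hξ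
  obtain ⟨_, rfl, hyξ⟩ := hy ξ hξ
  exact ⟨s, hs, (Finset.erase_subset_iff_of_mem (Finset.singleton_subset_iff.mp hyξ)).mp hsξ⟩

theorem sqSpan_eq_inf_sup (F : Set (Finset σ)) (y : σ) :
    sqSpan k F = sqSpan k (CFam y F) ⊓ (sqSpan k (NFam y F) ⊔ Ideal.span {X y}) := by
  have hNF : sqSpan k (NFam y F) ≤ sqSpan k F :=
    sqSpan_le_sqSpan fun s hs => ⟨s, hs.1, subset_rfl⟩
  have hNC : sqSpan k (NFam y F) ≤ sqSpan k (CFam y F) :=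
    sqSpan_le_sqSpan fun s hs => ⟨s, ⟨s, hs.1, Finset.erase_eq_of_notMem hs.2⟩, subset_rfl⟩
  refine le_antisymm (le_inf ?_ ?_) ?_
  · exact sqSpan_le_sqSpan fun s hs => ⟨s.erase y, ⟨s, hs, rfl⟩, Finset.erase_subset y s⟩
  · rw [sqSpan, Ideal.span_le]
    rintro _ ⟨s, hs, rfl⟩
    by_cases hy : y ∈ s
    · exact Ideal.mem_sup_right (Ideal.mem_span_singleton.mpr (Finset.dvd_prod_of_mem X hy))
    · exact Ideal.mem_sup_left (sqMono_mem_sqSpan ⟨hs, hy⟩)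
  · rintro f ⟨hfC, hfN⟩
    obtain ⟨g, hg, h, hh, rfl⟩ := Submodule.mem_sup.mp hfN
    have hhC : h ∈ sqSpan k (CFam y F) := by
      simpa using sub_mem hfC (hNC hg)
    exact add_mem (hNF hg) (sqSpan_CFam_inf_span_X_le F y ⟨hhC, hh⟩)

lemma dropVar_erase (y : σ) (s : Finset σ) : dropVar y (s.erase y) = dropVar y s := by
  ext x
  simp [dropVar, x.2]

end SquarefreeMonomial

section Transversal

variable {σ : Type}

def IsTransversal (F : Set (Finset σ)) (W : Set σ) : Prop := ∀ s ∈ F, ∃ x ∈ s, x ∈ W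

def TransversalUnmixed (F : Set (Finset σ)) : Prop :=
  ∀ W₁ W₂, Minimal (IsTransversal F) W₁ → Minimal (IsTransversal F) W₂ →
    W₁.ncard = W₂.ncard

variable {F : Set (Finset σ)} {W : Set σ}

lemma exists_mem_of_minimal_isTransversal (h : Minimal (IsTransversal F) W) {x : σ}
    (hx : x ∈ W) : ∃ s ∈ F, x ∈ s := by
  by_contra! hF
  refine h.notMem_of_prop_sdiff_singleton (fun s hs => ?_) hx
  obtain ⟨z, hzs, hzW⟩ := h.prop s hs
  exact ⟨z, hzs, hzW, fun hzx => hF s hs (hzx ▸ hzs)⟩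

end Transversal

section MinimalPrimes

variable {k : Type} [Field k] {σ : Type}

lemma X_mem_span_X_image_iff {W : Set σ} {i : σ} :
    (X i : MvPolynomial σ k) ∈ Ideal.span (X '' W) ↔ i ∈ W := by
  classical
  rw [mem_ideal_span_X_image]
  simp [support_X, Finsupp.single_apply]

lemma isPrime_span_X_image (W : Set σ) :
    (Ideal.span (X '' W : Set (MvPolynomial σ k))).IsPrime := by
  classical
  let φ : MvPolynomial σ k →ₐ[k] MvPolynomial σ k :=
    aeval fun i => if i ∈ W then 0 else X i
  have hX : ∀ i, X i - φ (X i) ∈ Ideal.span (X '' W) := by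
    intro i
    by_cases hi : i ∈ W
    · simpa [φ, hi] using (Ideal.subset_span ⟨i, hi, rfl⟩ : X i ∈ Ideal.span (X '' W))
    · simp [φ, hi]
  have hsub : ∀ f, f - φ f ∈ Ideal.span (X '' W) := by
    intro f
    induction f using MvPolynomial.induction_on with
    | C a => simp [φ]
    | add p q hp hq => simpa [add_sub_add_comm] using add_mem hp hq
    | mul_X p i hp =>
      rw [show p * X i - φ (p * X i) = (p - φ p) * X i + φ p * (X i - φ (X i)) by
        rw [map_mul]; ring]
      exact add_mem (Ideal.mul_mem_right _ _ hp) (Ideal.mul_mem_left _ _ (hX i))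
  have hker : Ideal.span (X '' W) = RingHom.ker φ := by
    refine le_antisymm (Ideal.span_le.mpr ?_) fun f hf => ?_
    · rintro _ ⟨i, hi, rfl⟩
      simp [φ, hi]
    · simpa [RingHom.mem_ker.mp hf] using hsub f
  rw [hker]
  exact RingHom.ker_isPrime _

lemma isTransversal_of_sqSpan_le {F : Set (Finset σ)} {P : Ideal (MvPolynomial σ k)}
    (hP : P.IsPrime) (h : sqSpan k F ≤ P) : IsTransversal F {i | X i ∈ P} := fun _ hs =>
  (hP.prod_mem_iff).mp (h (sqMono_mem_sqSpan hs))

lemma sqSpan_le_span_X_image_iff {F : Set (Finset σ)} {W : Set σ} :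
    sqSpan k F ≤ Ideal.span (X '' W) ↔ IsTransversal F W := by
  refine ⟨fun h => ?_, fun h => ?_⟩
  · simpa [X_mem_span_X_image_iff] using isTransversal_of_sqSpan_le (isPrime_span_X_image W) h
  · rw [sqSpan, Ideal.span_le]
    rintro _ ⟨s, hs, rfl⟩
    obtain ⟨x, hxs, hxW⟩ := h s hs
    exact Ideal.mem_of_dvd _ (Finset.dvd_prod_of_mem X hxs) (Ideal.subset_span ⟨x, hxW, rfl⟩)

lemma exists_minimal_isTransversal_of_mem_minimalPrimes {F : Set (Finset σ)}
    {P : Ideal (MvPolynomial σ k)} (hP : P ∈ (sqSpan k F).minimalPrimes) :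
    ∃ W, Minimal (IsTransversal F) W ∧ P = Ideal.span (X '' W) := by
  set W := {i | (X i : MvPolynomial σ k) ∈ P}
  have hWP : Ideal.span (X '' W) ≤ P := by
    rw [Ideal.span_le]
    rintro _ ⟨i, hi, rfl⟩
    exact hi
  have hW : IsTransversal F W := isTransversal_of_sqSpan_le hP.1.1 hP.1.2
  have hmin : Minimal (fun Q => Q.IsPrime ∧ sqSpan k F ≤ Q) P := hP
  have hPW : P = Ideal.span (X '' W) :=
    hmin.eq_of_le ⟨isPrime_span_X_image W, sqSpan_le_span_X_image_iff.mpr hW⟩ hWP |>.symm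
  refine ⟨W, ⟨hW, fun W' hW' hW'W i hi => ?_⟩, hPW⟩
  have := hmin.le_of_le ⟨isPrime_span_X_image W', sqSpan_le_span_X_image_iff.mpr hW'⟩
    (hPW ▸ Ideal.span_mono (Set.image_mono hW'W))
  exact X_mem_span_X_image_iff.mp (this hi)

lemma primeHt_eq_height {R : Type*} [CommRing R] (P : Ideal R) (hP : P.IsPrime) :
    primeHt P hP = P.height :=
  (PrimeSpectrum.height_eq_orderHeight ⟨P, hP⟩).symm

lemma height_span_X_image_eq_of_ncard_eq [Finite σ] {W₁ W₂ : Set σ}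
    (h : W₁.ncard = W₂.ncard) :
    (Ideal.span (X '' W₁ : Set (MvPolynomial σ k))).height =
      (Ideal.span (X '' W₂ : Set (MvPolynomial σ k))).height := by
  have := Fintype.ofFinite σ
  obtain ⟨e, he⟩ := Equiv.Perm.exists_map_finset_eq W₁.toFinset W₂.toFinset
    (by rwa [← Set.ncard_eq_toFinset_card', ← Set.ncard_eq_toFinset_card'])
  have himg : e '' W₁ = W₂ := by
    simpa using congrArg (fun s : Finset σ => (s : Set σ)) he
  rw [← RingEquiv.height_map (renameEquiv k e).toRingEquiv, Ideal.map_span, ← himg,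
    Set.image_image, Set.image_image]
  simp

theorem unmixedIdeal_sqSpan [Finite σ] {F : Set (Finset σ)} (hF : TransversalUnmixed F) :
    UnmixedIdeal (sqSpan k F) := by
  intro P Q hP hQ
  obtain ⟨W₁, hW₁, rfl⟩ := exists_minimal_isTransversal_of_mem_minimalPrimes hP
  obtain ⟨W₂, hW₂, rfl⟩ := exists_minimal_isTransversal_of_mem_minimalPrimes hQ
  rw [primeHt_eq_height, primeHt_eq_height]
  exact height_span_X_image_eq_of_ncard_eq (hF W₁ W₂ hW₁ hW₂)

end MinimalPrimes

section TransversalTransfer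

variable {σ : Type} {F : Set (Finset σ)} {y : σ}

lemma minimal_isTransversal_image_val {W : Set {x : σ // x ≠ y}}
    (h : Minimal (IsTransversal (dropVar y '' F)) W) :
    Minimal (IsTransversal F) (Subtype.val '' W) := by
  have hiff : ∀ W' : Set {x : σ // x ≠ y},
      IsTransversal (dropVar y '' F) W' ↔ IsTransversal F (Subtype.val '' W') := by
    refine fun W' => ⟨fun hW' s hs => ?_, fun hW' => ?_⟩
    · obtain ⟨x, hx, hxW'⟩ := hW' _ ⟨s, hs, rfl⟩
      exact ⟨x, Finset.mem_subtype.mp hx, x, hxW', rfl⟩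
    · rintro _ ⟨s, hs, rfl⟩
      obtain ⟨_, hxs, x, hxW', rfl⟩ := hW' s hs
      exact ⟨x, Finset.mem_subtype.mpr hxs, hxW'⟩
  refine ⟨(hiff W).mp h.prop, fun W₀ hW₀ hW₀W => ?_⟩
  obtain ⟨W', rfl⟩ : ∃ W', Subtype.val '' W' = W₀ :=
    Set.subset_range_iff_exists_image_eq.mp (hW₀W.trans (Set.image_subset_range _ _))
  exact Set.image_mono (h.le_of_le ((hiff W').mpr hW₀)
    ((Set.image_subset_image_iff Subtype.val_injective).mp hW₀W))

lemma isTransversal_CFam_iff {W : Set σ} (hy : y ∉ W) :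
    IsTransversal (CFam y F) W ↔ IsTransversal F W := by
  refine ⟨fun hW s hs => ?_, fun hW => ?_⟩
  · obtain ⟨x, hx, hxW⟩ := hW _ ⟨s, hs, rfl⟩
    exact ⟨x, Finset.mem_of_mem_erase hx, hxW⟩
  · rintro _ ⟨s, hs, rfl⟩
    obtain ⟨x, hx, hxW⟩ := hW s hs
    exact ⟨x, Finset.mem_erase.mpr ⟨fun hxy => hy (hxy ▸ hxW), hx⟩, hxW⟩

lemma minimal_isTransversal_of_CFam {W : Set σ} (h : Minimal (IsTransversal (CFam y F)) W) :
    Minimal (IsTransversal F) W := by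
  have hyW : ∀ {W'}, W' ⊆ W → y ∉ W' := fun hW'W hy => by
    obtain ⟨_, ⟨s, -, rfl⟩, hys⟩ := exists_mem_of_minimal_isTransversal h (hW'W hy)
    exact Finset.notMem_erase y s hys
  exact ⟨(isTransversal_CFam_iff (hyW subset_rfl)).mp h.prop, fun W' hW' hW'W =>
    h.le_of_le ((isTransversal_CFam_iff (hyW hW'W)).mpr hW') hW'W⟩

lemma minimal_isTransversal_insert_of_NFam {W : Set σ} {s₀ : Finset σ} (hs₀ : s₀ ∈ F)
    (hy : y ∈ s₀) (hdisj : ∀ t ∈ NFam y F, Disjoint t s₀)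
    (h : Minimal (IsTransversal (NFam y F)) W) :
    y ∉ W ∧ Minimal (IsTransversal F) (insert y W) := by
  have hW : ∀ x ∈ W, x ∉ s₀ := fun x hx hxs₀ => by
    obtain ⟨t, ht, hxt⟩ := exists_mem_of_minimal_isTransversal h hx
    exact Finset.disjoint_left.mp (hdisj t ht) hxt hxs₀
  refine ⟨fun hyW => hW y hyW hy, fun s hs => ?_, fun W' hW' hW'W => ?_⟩
  · by_cases hys : y ∈ s
    · exact ⟨y, hys, Set.mem_insert y W⟩
    · obtain ⟨x, hxs, hxW⟩ := h.prop s ⟨hs, hys⟩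
      exact ⟨x, hxs, Set.mem_insert_of_mem y hxW⟩
  · have hyW' : y ∈ W' := by
      obtain ⟨x, hxs₀, hxW'⟩ := hW' s₀ hs₀
      rcases hW'W hxW' with rfl | hxW
      · exact hxW'
      · exact absurd hxs₀ (hW x hxW)
    have hW'y : IsTransversal (NFam y F) (W' \ {y}) := fun t ht => by
      obtain ⟨x, hxt, hxW'⟩ := hW' t ht.1
      exact ⟨x, hxt, hxW', fun hxy => ht.2 (hxy ▸ hxt)⟩
    have := h.le_of_le hW'y fun x hx => (hW'W hx.1).resolve_left hx.2
    exact Set.insert_subset hyW' (this.trans Set.sdiff_subset)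

lemma TransversalUnmixed.dropVar_CFam (hF : TransversalUnmixed F) (y : σ) :
    TransversalUnmixed (dropVar y '' CFam y F) := by
  intro W₁ W₂ h₁ h₂
  have := hF _ _ (minimal_isTransversal_of_CFam (minimal_isTransversal_image_val h₁))
    (minimal_isTransversal_of_CFam (minimal_isTransversal_image_val h₂))
  rwa [Set.ncard_image_of_injective _ Subtype.val_injective,
    Set.ncard_image_of_injective _ Subtype.val_injective] at this

lemma TransversalUnmixed.dropVar_NFam [Finite σ] (hF : TransversalUnmixed F) {s₀ : Finset σ}
    (hs₀ : s₀ ∈ F) (hy : y ∈ s₀) (hdisj : ∀ t ∈ NFam y F, Disjoint t s₀) :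
    TransversalUnmixed (dropVar y '' NFam y F) := by
  intro W₁ W₂ h₁ h₂
  obtain ⟨hy₁, h₁'⟩ :=
    minimal_isTransversal_insert_of_NFam hs₀ hy hdisj (minimal_isTransversal_image_val h₁)
  obtain ⟨hy₂, h₂'⟩ :=
    minimal_isTransversal_insert_of_NFam hs₀ hy hdisj (minimal_isTransversal_image_val h₂)
  have := hF _ _ h₁' h₂'
  rwa [Set.ncard_insert_of_notMem hy₁, Set.ncard_insert_of_notMem hy₂,
    Set.ncard_image_of_injective _ Subtype.val_injective,
    Set.ncard_image_of_injective _ Subtype.val_injective, Nat.add_right_cancel_iff] at this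

end TransversalTransfer

section GVD

variable {k : Type} [Field k]

lemma unmixedIdeal_of_isPrime {R : Type*} [CommRing R] {I : Ideal R} (hI : I.IsPrime) :
    UnmixedIdeal I := by
  intro P Q hP hQ
  rw [Ideal.minimalPrimes_eq_subsingleton_self] at hP hQ
  obtain rfl := hP
  obtain rfl := hQ
  rfl

lemma isGVD_top (σ : Type) : IsGVD k σ ⊤ :=
  .base σ ⊤ (fun _ _ hP => by simp [Ideal.minimalPrimes_top] at hP) (Or.inl rfl)

lemma isGVD_sqSpan_empty (σ : Type) : IsGVD k σ (sqSpan k ∅) := by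
  have h : sqSpan k (∅ : Set (Finset σ)) = Ideal.span (X '' ∅) := by simp [sqSpan]
  exact .base σ _ (h ▸ unmixedIdeal_of_isPrime (isPrime_span_X_image ∅)) (Or.inr ⟨∅, h⟩)

lemma isGVD_sqSpan_of_CFam_NFam {σ : Type} [Finite σ] {F : Set (Finset σ)}
    (hF : TransversalUnmixed F) (y : σ)
    (hC : IsGVD k {x : σ // x ≠ y} (sqSpan k (dropVar y '' CFam y F)))
    (hN : IsGVD k {x : σ // x ≠ y} (sqSpan k (dropVar y '' NFam y F))) :
    IsGVD k σ (sqSpan k F) :=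
  .step σ _ (unmixedIdeal_sqSpan hF) F rfl y (sqSpan_eq_inf_sup F y) hC hN

end GVD

section Height

variable {V : Type} {G : SimpleGraph V}

lemma heightVx_le_heightVx_add_one_of_adj {u w : V} (h : G.Adj u w) :
    heightVx G u ≤ heightVx G w + 1 := by
  by_cases hw : {n | ∃ l, IsLeafVx G l ∧ G.Reachable w l ∧ G.dist w l = n}.Nonempty
  · obtain ⟨l, hl, hwl, hd⟩ := Nat.sInf_mem hw
    calc heightVx G u ≤ G.dist u l := Nat.sInf_le ⟨l, hl, h.reachable.trans hwl, rfl⟩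
      _ ≤ G.dist u w + G.dist w l := hwl.dist_triangle_right u
      _ = heightVx G w + 1 := by rw [SimpleGraph.dist_eq_one_iff_adj.mpr h, hd, add_comm]; rfl
  · have hu : heightVx G u = 0 := Nat.sInf_eq_zero.mpr <| Or.inr <|
      Set.eq_empty_of_forall_notMem fun _ ⟨l, hl, hul, _⟩ =>
        hw ⟨_, l, hl, h.reachable.symm.trans hul, rfl⟩
    omega

lemma IsBalanced.isBipartiteWith_odd (hbal : IsBalanced G) :
    G.IsBipartiteWith {v | Odd (heightVx G v)} {v | Odd (heightVx G v)}ᶜ where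
  disjoint := disjoint_compl_right
  mem_of_adj u w h := by
    have := heightVx_le_heightVx_add_one_of_adj h
    have := heightVx_le_heightVx_add_one_of_adj h.symm
    have := hbal u w h
    simp only [Set.mem_ofPred_eq, Set.mem_compl_iff, Nat.odd_iff]
    omega

end Height

namespace SimpleGraph

variable {V : Type} {G : SimpleGraph V}

lemma IsAcyclic.eq_of_adj_of_dist_eq_add_one (hG : G.IsAcyclic) {r c z₁ z₂ : V}
    (h₁ : G.Adj z₁ c) (h₂ : G.Adj z₂ c) (hd₁ : G.dist r c = G.dist r z₁ + 1)
    (hd₂ : G.dist r c = G.dist r z₂ + 1) : z₁ = z₂ := by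
  have hrc : G.Reachable r c := Reachable.of_dist_ne_zero (by omega)
  have hpen : ∀ z, G.Adj z c → G.dist r c = G.dist r z + 1 →
      ∃ p : G.Path r c, p.1.penultimate = z := by
    intro z hz hd
    obtain ⟨q, hq, hql⟩ := (hrc.trans hz.symm.reachable).exists_path_of_dist
    have hc : c ∉ q.support := fun hc => by
      have := dist_le (q.takeUntil c hc)
      have := q.length_takeUntil_le_length hc
      omega
    exact ⟨⟨q.concat hz, hq.concat hc hz⟩, q.penultimate_concat hz⟩
  obtain ⟨p₁, rfl⟩ := hpen z₁ h₁ hd₁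
  obtain ⟨p₂, rfl⟩ := hpen z₂ h₂ hd₂
  rw [(hG.subsingleton_path r c).elim p₁ p₂]

lemma IsAcyclic.exists_adj_forall_ne_pendant [Finite V] (hG : G.IsAcyclic)
    {O : Set V} (hO : G.IsBipartiteWith O Oᶜ) {v₀ : V} (hv₀ : v₀ ∈ O)
    (hnbr : ∀ v ∈ O, ∃ u, G.Adj v u) :
    ∃ v ∈ O, ∃ y, G.Adj v y ∧
      ∀ c, G.Adj v c → c ≠ y → ∀ z, G.Adj c z → z = v := by
  obtain ⟨v, ⟨hvO, hv₀v⟩, hmax⟩ := Set.exists_max_image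
    {u | u ∈ O ∧ G.Reachable v₀ u} (G.dist v₀) (Set.toFinite _) ⟨v₀, hv₀, .rfl⟩
  obtain ⟨y, hvy, hfar⟩ : ∃ y, G.Adj v y ∧
      ∀ c, G.Adj v c → c ≠ y → G.dist v₀ c = G.dist v₀ v + 1 := by
    by_cases hcl : ∃ y, G.Adj v y ∧ G.dist v₀ v = G.dist v₀ y + 1
    · obtain ⟨y, hvy, hyd⟩ := hcl
      refine ⟨y, hvy, fun c hvc hcy => ?_⟩
      refine (hG.dist_eq_dist_add_one_of_adj_of_reachable v₀ hvc hv₀v).resolve_left ?_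
      exact fun hcd => hcy (hG.eq_of_adj_of_dist_eq_add_one hvc.symm hvy.symm hcd hyd)
    · obtain ⟨y, hvy⟩ := hnbr v hvO
      refine ⟨y, hvy, fun c hvc _ => ?_⟩
      exact (hG.dist_eq_dist_add_one_of_adj_of_reachable v₀ hvc hv₀v).resolve_left
        fun hcd => hcl ⟨c, hvc, hcd⟩
  refine ⟨v, hvO, y, hvy, fun c hvc hcy z hcz => ?_⟩
  have hv₀c := hv₀v.trans hvc.reachable
  have hzO : z ∈ O := hO.mem_of_mem_adj' (hO.mem_of_mem_adj hvO hvc) hcz.symm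
  have hzv := hmax z ⟨hzO, hv₀c.trans hcz.reachable⟩
  have hcd := hfar c hvc hcy
  rcases hG.dist_eq_dist_add_one_of_adj_of_reachable v₀ hcz hv₀c with hzd | hzd
  · exact hG.eq_of_adj_of_dist_eq_add_one hcz.symm hvc hzd hcd
  · omega

lemma Connected.eq_of_forall_not_adj (hconn : G.Connected) {u : V} (hu : ∀ x, ¬ G.Adj u x)
    (w : V) : w = u := by
  obtain ⟨p⟩ := hconn u w
  cases p with
  | nil => rfl
  | cons h _ => exact absurd h (hu _)

variable (G) in
def edgesAt (O : Set V) : SimpleGraph V := G ⊓ fromRel fun a _ => a ∈ O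

lemma edgesAt_adj {O : Set V} {a b : V} :
    (G.edgesAt O).Adj a b ↔ G.Adj a b ∧ (a ∈ O ∨ b ∈ O) := by
  simp only [edgesAt, inf_adj, fromRel_adj]
  exact ⟨fun h => ⟨h.1, h.2.2⟩, fun h => ⟨h.1, h.1.ne, h.2⟩⟩

lemma isBipartiteWith_edgesAt {O : Set V} (hO : ∀ a ∈ O, ∀ b, G.Adj a b → b ∉ O) :
    (G.edgesAt O).IsBipartiteWith O Oᶜ where
  disjoint := disjoint_compl_right
  mem_of_adj a b h := by
    obtain ⟨hab, ha | hb⟩ := edgesAt_adj.mp h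
    · exact Or.inl ⟨ha, hO a ha b hab⟩
    · exact Or.inr ⟨hO b hb a hab.symm, hb⟩

variable {y : V}

lemma IsAcyclic.edgesAt_comap_val (hG : G.IsAcyclic) (O' : Set {x : V // x ≠ y}) :
    ((G.comap Subtype.val).edgesAt O').IsAcyclic :=
  (hG.of_comap (Function.Embedding.subtype _)).anti inf_le_left

lemma IsBipartiteWith.edgesAt_comap_val {O : Set V} (hO : G.IsBipartiteWith O Oᶜ)
    {O' : Set {x : V // x ≠ y}} (hO' : ∀ u ∈ O', ↑u ∈ O) :
    ((G.comap Subtype.val).edgesAt O').IsBipartiteWith O' O'ᶜ :=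
  isBipartiteWith_edgesAt fun a ha b hab hb => hO.mem_of_mem_adj (hO' a ha) hab (hO' b hb)

end SimpleGraph

section Restriction

open SimpleGraph

variable {σ : Type} [Fintype σ] {G : SimpleGraph σ} {O : Set σ} {y : σ}

lemma mem_nbrFinset {v x : σ} : x ∈ nbrFinset G v ↔ G.Adj v x := by
  simp [nbrFinset]

lemma nbrFinset_edgesAt_comap_val {O' : Set {x : σ // x ≠ y}} {u : {x : σ // x ≠ y}}
    (hu : u ∈ O') :
    nbrFinset ((G.comap Subtype.val).edgesAt O') u = dropVar y (nbrFinset G u) := by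
  ext x
  simp [mem_nbrFinset, edgesAt_adj, dropVar, hu]

lemma dropVar_image_CFam_nbrFinset_image (hy : y ∉ O) :
    dropVar y '' CFam y (nbrFinset G '' O) =
      nbrFinset ((G.comap Subtype.val).edgesAt (Subtype.val ⁻¹' O)) ''
        (Subtype.val ⁻¹' O) := by
  ext t
  constructor
  · rintro ⟨_, ⟨_, ⟨v, hv, rfl⟩, rfl⟩, rfl⟩
    exact ⟨⟨v, fun h => hy (h ▸ hv)⟩, hv,
      by rw [nbrFinset_edgesAt_comap_val hv, dropVar_erase]⟩
  · rintro ⟨u, hu, rfl⟩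
    exact ⟨_, ⟨_, ⟨u, hu, rfl⟩, rfl⟩,
      by rw [nbrFinset_edgesAt_comap_val hu, dropVar_erase]⟩

lemma dropVar_image_NFam_nbrFinset_image (hy : y ∉ O) :
    dropVar y '' NFam y (nbrFinset G '' O) =
      nbrFinset ((G.comap Subtype.val).edgesAt {u : {x // x ≠ y} | ↑u ∈ O ∧ ¬ G.Adj u y})
        '' {u : {x // x ≠ y} | ↑u ∈ O ∧ ¬ G.Adj u y} := by
  ext t
  constructor
  · rintro ⟨_, ⟨⟨v, hv, rfl⟩, hyv⟩, rfl⟩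
    have hu : (⟨v, fun h => hy (h ▸ hv)⟩ : {x // x ≠ y}) ∈
        {u : {x // x ≠ y} | ↑u ∈ O ∧ ¬ G.Adj u y} :=
      ⟨hv, fun h => hyv (mem_nbrFinset.mpr h)⟩
    exact ⟨_, hu, nbrFinset_edgesAt_comap_val hu⟩
  · rintro ⟨u, hu, rfl⟩
    exact ⟨_, ⟨⟨u, hu.1, rfl⟩, fun h => hu.2 (mem_nbrFinset.mp h)⟩,
      (nbrFinset_edgesAt_comap_val hu).symm⟩

lemma disjoint_nbrFinset_of_forall_ne_pendant {v : σ} (hvy : G.Adj v y)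
    (hpend : ∀ c, G.Adj v c → c ≠ y → ∀ z, G.Adj c z → z = v) :
    ∀ t ∈ NFam y (nbrFinset G '' O), Disjoint t (nbrFinset G v) := by
  rintro _ ⟨⟨w, -, rfl⟩, hyw⟩
  refine Finset.disjoint_left.mpr fun x hwx hvx => hyw ?_
  rw [mem_nbrFinset] at hwx hvx
  obtain rfl := hpend x hvx (fun hxy => hyw (hxy ▸ mem_nbrFinset.mpr hwx)) w hwx.symm
  exact mem_nbrFinset.mpr hvy

end Restriction

theorem isGVD_sqSpan_nbrFinset_image (k : Type) [Field k] {σ : Type} [Fintype σ]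
    {G : SimpleGraph σ} {O : Set σ} (hG : G.IsAcyclic) (hO : G.IsBipartiteWith O Oᶜ)
    (hF : TransversalUnmixed (nbrFinset G '' O)) : IsGVD k σ (sqSpan k (nbrFinset G '' O)) := by
  induction h : Fintype.card σ using Nat.strong_induction_on generalizing σ with
  | _ n ih =>
  by_cases hiso : ∅ ∈ nbrFinset G '' O
  · rw [sqSpan_eq_top_of_empty_mem hiso]
    exact isGVD_top σ
  obtain rfl | ⟨v₀, hv₀⟩ := O.eq_empty_or_nonempty
  · rw [Set.image_empty]
    exact isGVD_sqSpan_empty σ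
  obtain ⟨v, hvO, y, hvy, hpend⟩ := hG.exists_adj_forall_ne_pendant hO hv₀ fun v hv => by
    obtain ⟨x, hx⟩ := Finset.nonempty_iff_ne_empty.mpr fun h => hiso ⟨v, hv, h⟩
    exact ⟨x, mem_nbrFinset.mp hx⟩
  have hyO : y ∉ O := hO.mem_of_mem_adj hvO hvy
  have hcard : Fintype.card {x // x ≠ y} < n :=
    h ▸ Fintype.card_subtype_lt (p := (· ≠ y)) (not_not.mpr rfl)
  refine isGVD_sqSpan_of_CFam_NFam hF y ?_ ?_
  · have hC := hF.dropVar_CFam y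
    rw [dropVar_image_CFam_nbrFinset_image hyO] at hC ⊢
    exact ih _ hcard (hG.edgesAt_comap_val _) (hO.edgesAt_comap_val fun _ hu => hu) hC rfl
  · have hN := hF.dropVar_NFam ⟨v, hvO, rfl⟩ (mem_nbrFinset.mpr hvy)
      (disjoint_nbrFinset_of_forall_ne_pendant hvy hpend)
    rw [dropVar_image_NFam_nbrFinset_image hyO] at hN ⊢
    exact ih _ hcard (hG.edgesAt_comap_val _) (hO.edgesAt_comap_val fun _ hu => hu.1) hN rfl

section TotalDomination

variable {V : Type} [Fintype V] {G : SimpleGraph V} {O : Set V}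

lemma subset_compl_of_minimal_isTransversal (hO : G.IsBipartiteWith O Oᶜ) {W : Set V}
    (hW : Minimal (IsTransversal (nbrFinset G '' O)) W) : W ⊆ Oᶜ := fun x hx => by
  obtain ⟨_, ⟨v, hv, rfl⟩, hxv⟩ := exists_mem_of_minimal_isTransversal hW hx
  exact hO.mem_of_mem_adj hv (mem_nbrFinset.mp hxv)

lemma subset_of_minimal_isTransversal_compl (hO : G.IsBipartiteWith O Oᶜ) {W : Set V}
    (hW : Minimal (IsTransversal (nbrFinset G '' Oᶜ)) W) : W ⊆ O := by
  simpa using subset_compl_of_minimal_isTransversal (by simpa using hO.symm) hW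

lemma isTDSet_iff (hO : G.IsBipartiteWith O Oᶜ) {S : Set V} :
    IsTDSet G S ↔
      IsTransversal (nbrFinset G '' O) (S \ O) ∧
        IsTransversal (nbrFinset G '' Oᶜ) (S ∩ O) := by
  simp only [IsTDSet, nbhd, Set.eq_univ_iff_forall, Set.mem_ofPred_eq]
  refine ⟨fun hS => ⟨?_, ?_⟩, fun ⟨hS₁, hS₂⟩ x => ?_⟩
  · rintro _ ⟨v, hv, rfl⟩
    obtain ⟨z, hzS, hzv⟩ := hS v
    exact ⟨z, mem_nbrFinset.mpr hzv.symm, hzS, hO.mem_of_mem_adj hv hzv.symm⟩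
  · rintro _ ⟨v, hv, rfl⟩
    obtain ⟨z, hzS, hzv⟩ := hS v
    exact ⟨z, mem_nbrFinset.mpr hzv.symm, hzS, hO.mem_of_mem_adj' hv hzv⟩
  · by_cases hx : x ∈ O
    · obtain ⟨z, hxz, hzS, -⟩ := hS₁ _ ⟨x, hx, rfl⟩
      exact ⟨z, hzS, (mem_nbrFinset.mp hxz).symm⟩
    · obtain ⟨z, hxz, hzS, -⟩ := hS₂ _ ⟨x, hx, rfl⟩
      exact ⟨z, hzS, (mem_nbrFinset.mp hxz).symm⟩

lemma isMinTDSet_union (hO : G.IsBipartiteWith O Oᶜ) {W W' : Set V}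
    (hW : Minimal (IsTransversal (nbrFinset G '' O)) W)
    (hW' : Minimal (IsTransversal (nbrFinset G '' Oᶜ)) W') : IsMinTDSet G (W ∪ W') := by
  have hWO := subset_compl_of_minimal_isTransversal hO hW
  have hW'O := subset_of_minimal_isTransversal_compl hO hW'
  have hdiff : (W ∪ W') \ O = W := Set.ext fun x =>
    ⟨fun h => h.1.resolve_right fun hx => h.2 (hW'O hx), fun hx => ⟨Or.inl hx, hWO hx⟩⟩
  have hinter : (W ∪ W') ∩ O = W' := Set.ext fun x =>
    ⟨fun h => h.1.resolve_left fun hx => hWO hx h.2, fun hx => ⟨Or.inr hx, hW'O hx⟩⟩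
  refine ⟨(isTDSet_iff hO).mpr ⟨by rw [hdiff]; exact hW.prop, by rw [hinter]; exact hW'.prop⟩,
    fun S hS hSTD => ?_⟩
  obtain ⟨hS₁, hS₂⟩ := (isTDSet_iff hO).mp hSTD
  have h₁ := hW.le_of_le hS₁ ((Set.sdiff_subset_sdiff_left hS.subset).trans hdiff.le)
  have h₂ := hW'.le_of_le hS₂ ((Set.inter_subset_inter_left O hS.subset).trans hinter.le)
  exact hS.not_subset
    (Set.union_subset (h₁.trans Set.sdiff_subset) (h₂.trans Set.inter_subset_left))

theorem transversalUnmixed_of_tdUnmixed (hconn : G.Connected) (hO : G.IsBipartiteWith O Oᶜ)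
    (htd : TDUnmixed G) : TransversalUnmixed (nbrFinset G '' O) := by
  intro W₁ W₂ h₁ h₂
  by_cases hnbr : ∀ u, ∃ x, G.Adj u x
  · obtain ⟨W', hW'⟩ : ∃ W', Minimal (IsTransversal (nbrFinset G '' Oᶜ)) W' :=
      exists_minimal_of_wellFoundedLT _ ⟨Set.univ, fun _ ⟨u, _, hu⟩ =>
        let ⟨x, hx⟩ := hnbr u; ⟨x, hu ▸ mem_nbrFinset.mpr hx, trivial⟩⟩
    have hdisj : ∀ W, Minimal (IsTransversal (nbrFinset G '' O)) W → Disjoint W W' :=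
      fun W hW => Set.disjoint_of_subset (subset_compl_of_minimal_isTransversal hO hW)
        (subset_of_minimal_isTransversal_compl hO hW') disjoint_compl_left
    have h := htd _ _ (isMinTDSet_union hO h₁ hW') (isMinTDSet_union hO h₂ hW')
    rwa [Set.ncard_union_eq (hdisj W₁ h₁), Set.ncard_union_eq (hdisj W₂ h₂),
      Nat.add_right_cancel_iff] at h
  · simp only [not_forall, not_exists] at hnbr
    obtain ⟨u, hu⟩ := hnbr
    have hno : ∀ v x, ¬ G.Adj v x := fun v x hvx =>
      hvx.ne ((hconn.eq_of_forall_not_adj hu v).trans (hconn.eq_of_forall_not_adj hu x).symm)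
    have hempty : ∀ W, Minimal (IsTransversal (nbrFinset G '' O)) W → W = ∅ :=
      fun W hW => Set.eq_empty_of_forall_notMem fun x hx => by
        obtain ⟨_, ⟨v, -, rfl⟩, hxv⟩ := exists_mem_of_minimal_isTransversal hW hx
        exact hno v x (mem_nbrFinset.mp hxv)
    rw [hempty W₁ h₁, hempty W₂ h₂]

end TotalDomination

lemma oddONI_eq_sqSpan (k : Type) [Field k] {V : Type} [Fintype V] (G : SimpleGraph V) :
    oddONI k G = sqSpan k (nbrFinset G '' {v | Odd (heightVx G v)}) := by
  simp only [oddONI, Set.image, eq_comm]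
  rfl

/-- **Theorem** (Theorem 4.2): the odd-open neighborhood ideal of a finite TD-unmixed
balanced tree is geometrically vertex decomposable. -/
theorem oddONI_isGVD (k : Type) [Field k] {V : Type} [Fintype V] (G : SimpleGraph V)
    (htree : G.IsTree) (hbal : IsBalanced G) (hunm : TDUnmixed G) :
    IsGVD k V (oddONI k G) := by
  have hO := hbal.isBipartiteWith_odd
  rw [oddONI_eq_sqSpan]
  exact isGVD_sqSpan_nbrFinset_image k htree.isAcyclic hO
    (transversalUnmixed_of_tdUnmixed htree.connected hO hunm)
end

section
/- Let T be a finite TD-unmixed tree. Then the stable complex S(T) is a pure vertex decomposable simplicial complex. -/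
open scoped Classical

section ComplexDefs

variable {V : Type}

/-- The facets of a simplicial complex (represented as its set of faces):
the maximal faces. -/
def facetsCx (Δ : Set (Finset V)) : Set (Finset V) :=
  {s ∈ Δ | ∀ t ∈ Δ, s ⊆ t → s = t}

/-- A simplicial complex is pure if all of its facets have the same cardinality. -/
def PureCx (Δ : Set (Finset V)) : Prop :=
  ∀ s ∈ facetsCx Δ, ∀ t ∈ facetsCx Δ, s.card = t.card

/-- The deletion of a vertex from a simplicial complex. -/
def delCx (Δ : Set (Finset V)) (v : V) : Set (Finset V) := {s ∈ Δ | v ∉ s}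

/-- The link of a vertex in a simplicial complex. -/
noncomputable def linkCx (Δ : Set (Finset V)) (v : V) : Set (Finset V) :=
  {s ∈ Δ | v ∉ s ∧ insert v s ∈ Δ}

/-- A shedding vertex: every facet of the deletion is a facet of the complex. -/
def IsSheddingVx (Δ : Set (Finset V)) (v : V) : Prop :=
  ∀ F ∈ facetsCx (delCx Δ v), F ∈ facetsCx Δ

/-- Vertex decomposability of a (pure) simplicial complex: `Δ` is a simplex or the empty
complex, or it has a shedding vertex whose deletion and link are vertex decomposable. -/
inductive VertexDecomposable : Set (Finset V) → Prop where
  | simplex (F : Finset V) : VertexDecomposable {s | s ⊆ F}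
  | empty : VertexDecomposable (∅ : Set (Finset V))
  | shed (Δ : Set (Finset V)) (v : V) (hshed : IsSheddingVx Δ v)
      (hdel : VertexDecomposable (delCx Δ v)) (hlink : VertexDecomposable (linkCx Δ v)) :
      VertexDecomposable Δ

end ComplexDefs

/-- The stable complex of a graph: faces are the complements of total dominating sets. -/
def stableCx {V : Type} [Fintype V] (G : SimpleGraph V) : Set (Finset V) :=
  {s : Finset V | ∃ D : Set V, IsTDSet G D ∧ (↑s : Set V) = Set.univ \ D}

/-! Facets of `S(G)` are the complements of the minimal TD-sets, so TD-unmixedness makes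
`S(G)` pure. Vertex decomposability holds for every tree: `S(G)` is the independence complex of the
hypergraph of open neighbourhoods, which for a tree is Berge-acyclic (its incidence graph is the
bipartite double cover of the tree). A Berge-acyclic hypergraph has a leaf edge, all of whose
vertices but one lie in no other edge; that remaining vertex is a shedding vertex, and its
deletion and link are independence complexes of Berge-acyclic hypergraphs with fewer
incidences. -/

open Finset

section Hypergraph

variable {ι V : Type} (I : Finset ι) (e : ι → Finset V) (A : Finset V)

def indepCx : Set (Finset V) := {s | s ⊆ A ∧ ∀ i ∈ I, ¬ e i ⊆ s}

/-- The counting form of Berge-acyclicity: for every nonempty subfamily, its incidence graph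
(edges `i ∈ J`, vertices of `J.sup e`, incidences `y ∈ e i`) has fewer edges than vertices. -/
def IsBergeAcyclic : Prop :=
  ∀ J ⊆ I, J.Nonempty → ∑ i ∈ J, (e i).card < (J.sup e).card + J.card

variable {I e A}

lemma IsBergeAcyclic.mono {J : Finset ι} (h : IsBergeAcyclic I e) (hJ : J ⊆ I) :
    IsBergeAcyclic J e :=
  fun K hK => h K (hK.trans hJ)

lemma IsBergeAcyclic.erase (h : IsBergeAcyclic I e) (x : V) :
    IsBergeAcyclic I (fun i => (e i).erase x) := by
  intro J hJ hne
  have hsup : J.sup (fun i => (e i).erase x) = (J.sup e).erase x := by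
    ext y; simp only [mem_sup, mem_erase]; grind
  have hacyc := h J hJ hne
  simp only [hsup]
  by_cases hx : x ∈ J.sup e
  · obtain ⟨i, hi, hxi⟩ := mem_sup.1 hx
    have hlt : ∑ j ∈ J, ((e j).erase x).card < ∑ j ∈ J, (e j).card :=
      sum_lt_sum (fun j _ => card_erase_le) ⟨i, hi, card_erase_lt_of_mem hxi⟩
    have hsup_pos : 0 < (J.sup e).card := card_pos.2 ⟨x, hx⟩
    rw [card_erase_of_mem hx]
    omega
  · have hJx : ∀ j ∈ J, (e j).erase x = e j := fun j hj =>
      erase_eq_of_notMem fun hxj => hx (mem_sup.2 ⟨j, hj, hxj⟩)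
    rwa [erase_eq_of_notMem hx, sum_congr rfl fun j hj => by rw [hJx j hj]]

/-- Double counting incidences: the vertices of degree at least two carry at least `2 * #I`
and at least twice their number of incidences. -/
lemma card_sup_add_card_le_sum_card
    (h : ∀ i ∈ I, 2 ≤ ((e i).filter fun y => 2 ≤ (I.filter (y ∈ e ·)).card).card) :
    (I.sup e).card + I.card ≤ ∑ i ∈ I, (e i).card := by
  set deg : V → ℕ := fun y => (I.filter (y ∈ e ·)).card
  set U := I.sup e
  set S := U.filter fun y => 2 ≤ deg y
  set P := U.filter fun y => ¬ 2 ≤ deg y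
  have hdouble : ∀ T : Finset V, ∑ i ∈ I, (e i ∩ T).card = ∑ y ∈ T, deg y := by
    intro T
    convert sum_card_bipartiteAbove_eq_sum_card_bipartiteBelow (fun i y => y ∈ e i)
      (s := I) (t := T) using 3 <;> ext <;>
      simp [bipartiteAbove, bipartiteBelow, and_comm]
  have htotal : ∑ i ∈ I, (e i).card = ∑ y ∈ U, deg y := by
    rw [← hdouble]
    exact sum_congr rfl fun i hi => by
      rw [inter_eq_left.2 (Finset.le_sup (f := e) hi)]
  have hS_edges : 2 * I.card ≤ ∑ y ∈ S, deg y := by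
    rw [← hdouble, mul_comm, ← smul_eq_mul, ← sum_const]
    refine sum_le_sum fun i hi => (h i hi).trans (card_le_card ?_)
    intro y hy
    obtain ⟨hyi, hdeg⟩ := mem_filter.1 hy
    exact mem_inter.2 ⟨hyi, mem_filter.2 ⟨mem_sup.2 ⟨i, hi, hyi⟩, hdeg⟩⟩
  have hS_vertices : 2 * S.card ≤ ∑ y ∈ S, deg y := by
    rw [mul_comm, ← smul_eq_mul, ← sum_const]
    exact sum_le_sum fun y hy => (mem_filter.1 hy).2
  have hP : P.card ≤ ∑ y ∈ P, deg y := by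
    rw [card_eq_sum_ones]
    refine sum_le_sum fun y hy => card_pos.2 ?_
    obtain ⟨i, hi, hyi⟩ := mem_sup.1 (mem_filter.1 hy).1
    exact ⟨i, mem_filter.2 ⟨hi, hyi⟩⟩
  have hsplit : ∑ y ∈ S, deg y + ∑ y ∈ P, deg y = ∑ y ∈ U, deg y :=
    sum_filter_add_sum_filter_not _ _ _
  have hcard : S.card + P.card = U.card := card_filter_add_card_filter_not _
  omega

lemma IsBergeAcyclic.exists_leaf_edge (h : IsBergeAcyclic I e) (hI : I.Nonempty)
    (hne : ∀ i ∈ I, (e i).Nonempty) :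
    ∃ i ∈ I, ∃ x ∈ e i, ∀ y ∈ e i, y ≠ x → ∀ j ∈ I, y ∈ e j → j = i := by
  by_contra! hcon
  refine (h I subset_rfl hI).not_ge (card_sup_add_card_le_sum_card fun i hi => ?_)
  have shared : ∀ x ∈ e i, ∃ y ∈ e i, y ≠ x ∧ 2 ≤ (I.filter (y ∈ e ·)).card := by
    intro x hx
    obtain ⟨y, hy, hyx, j, hj, hyj, hji⟩ := hcon i hi x hx
    exact ⟨y, hy, hyx, one_lt_card.2 ⟨j, by simp [hj, hyj], i, by simp [hi, hy], hji⟩⟩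
  obtain ⟨x₀, hx₀⟩ := hne i hi
  obtain ⟨y₁, hy₁, -, hdeg₁⟩ := shared x₀ hx₀
  obtain ⟨y₂, hy₂, hne₂, hdeg₂⟩ := shared y₁ hy₁
  exact one_lt_card.2
    ⟨y₁, by simp [hy₁, hdeg₁], y₂, by simp [hy₂, hdeg₂], hne₂.symm⟩

lemma delCx_indepCx (x : V) :
    delCx (indepCx I e A) x = indepCx (I.filter (x ∉ e ·)) e (A.erase x) := by
  ext s
  simp only [delCx, indepCx, Set.mem_ofPred_eq, mem_filter, subset_erase]
  constructor
  · rintro ⟨⟨hsA, hs⟩, hxs⟩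
    exact ⟨⟨hsA, hxs⟩, fun i hi => hs i hi.1⟩
  · rintro ⟨⟨hsA, hxs⟩, hs⟩
    exact ⟨⟨hsA, fun i hi hei => hs i ⟨hi, fun hxi => hxs (hei hxi)⟩ hei⟩, hxs⟩

lemma linkCx_indepCx {x : V} (hx : x ∈ A) :
    linkCx (indepCx I e A) x = indepCx I (fun i => (e i).erase x) (A.erase x) := by
  ext s
  simp only [linkCx, indepCx, Set.mem_ofPred_eq, subset_erase, insert_subset_iff,
    subset_insert_iff]
  constructor
  · rintro ⟨⟨hsA, -⟩, hxs, -, hs⟩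
    exact ⟨⟨hsA, hxs⟩, hs⟩
  · rintro ⟨⟨hsA, hxs⟩, hs⟩
    exact ⟨⟨hsA, fun i hi hei => hs i hi ((erase_subset x _).trans hei)⟩, hxs, ⟨hx, hsA⟩,
      hs⟩

/-- A facet avoiding `x` contains the rest of the leaf edge `e i`, so no face contains it
together with `x`. -/
lemma isSheddingVx_indepCx {i : ι} {x : V} (hi : i ∈ I) (hx : x ∈ e i)
    (hleaf : ∀ y ∈ e i, y ≠ x → ∀ j ∈ I, y ∈ e j → j = i)
    (heA : ∀ j ∈ I, e j ⊆ A) :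
    IsSheddingVx (indepCx I e A) x := by
  rintro F ⟨⟨⟨hFA, hF⟩, hxF⟩, hmax⟩
  have hrest : (e i).erase x ⊆ F := by
    intro y hy
    obtain ⟨hyx, hyi⟩ := mem_erase.1 hy
    by_contra hyF
    have hins : insert y F ∈ delCx (indepCx I e A) x := by
      refine ⟨⟨insert_subset (heA i hi hyi) hFA, fun j hj hje => ?_⟩, ?_⟩
      · by_cases hyj : y ∈ e j
        · obtain rfl := hleaf y hyi hyx j hj hyj
          simpa [hyx.symm, hxF] using hje hx
        · exact hF j hj ((subset_insert_iff_of_notMem hyj).1 hje)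
      · simp [Ne.symm hyx, hxF]
    exact hyF (hmax _ hins (subset_insert y F) ▸ mem_insert_self y F)
  refine ⟨⟨hFA, hF⟩, fun t ht hFt => ?_⟩
  have hxt : x ∉ t := fun hxt =>
    ht.2 i hi (insert_erase hx ▸ insert_subset hxt (hrest.trans hFt))
  exact hmax t ⟨ht, hxt⟩ hFt

theorem IsBergeAcyclic.vertexDecomposable_indepCx (h : IsBergeAcyclic I e)
    (heA : ∀ i ∈ I, e i ⊆ A) :
    VertexDecomposable (indepCx I e A) := by
  induction hsize : ∑ i ∈ I, (e i).card using Nat.strong_induction_on generalizing I e A with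
  | _ n ih =>
  by_cases hempty : ∃ i ∈ I, e i = ∅
  · obtain ⟨i, hi, hei⟩ := hempty
    have : indepCx I e A = ∅ :=
      Set.eq_empty_of_forall_notMem fun s hs => hs.2 i hi (hei ▸ empty_subset s)
    exact this ▸ .empty
  push Not at hempty
  rcases I.eq_empty_or_nonempty with rfl | hI
  · have : indepCx ∅ e A = {s | s ⊆ A} := by simp [indepCx]
    exact this ▸ .simplex A
  obtain ⟨i, hi, x, hx, hleaf⟩ := h.exists_leaf_edge hI hempty
  refine .shed _ x (isSheddingVx_indepCx hi hx hleaf heA) ?_ ?_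
  · rw [delCx_indepCx]
    refine ih _ ?_ (h.mono (filter_subset _ _)) (fun j hj => ?_) rfl
    · exact hsize ▸ sum_lt_sum_of_subset (filter_subset _ _) hi
        (by simp [hx]) (card_pos.2 ⟨x, hx⟩) fun _ _ _ => Nat.zero_le _
    · obtain ⟨hj, hxj⟩ := mem_filter.1 hj
      exact subset_erase.2 ⟨heA j hj, hxj⟩
  · rw [linkCx_indepCx (heA i hi hx)]
    refine ih _ ?_ (h.erase x) (fun j hj => erase_subset_erase x (heA j hj)) rfl
    exact hsize ▸ sum_lt_sum (fun j _ => card_erase_le) ⟨i, hi, card_erase_lt_of_mem hx⟩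

end Hypergraph

namespace SimpleGraph

variable {V : Type} {G : SimpleGraph V}

lemma IsTree.eq_of_adj_of_dist_eq_add_one (hG : G.IsTree) (r : V) {a b u : V}
    (ha : G.Adj a u) (hb : G.Adj b u) (hda : G.dist r u = G.dist r a + 1)
    (hdb : G.dist r u = G.dist r b + 1) : a = b := by
  obtain ⟨p, hp, -⟩ := hG.connected.exists_path_of_dist r u
  have eq_penultimate : ∀ c, G.Adj c u → G.dist r u = G.dist r c + 1 → c = p.penultimate := by
    intro c hc hdc
    obtain ⟨q, hq, hql⟩ := hG.connected.exists_path_of_dist r c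
    have hu : u ∉ q.support := fun hu => by
      have := (dist_le (q.takeUntil u hu)).trans (q.length_takeUntil_le_length hu)
      omega
    exact hG.isAcyclic.eq_penultimate_of_adj_end hp hc.symm
      (hG.isAcyclic.mem_support_of_ne_mem_support_of_adj_of_isPath hp hq hc.symm hu)
  exact (eq_penultimate a ha hda).trans (eq_penultimate b hb hdb).symm

/-- Remove the vertex of `J` farthest from a root: its neighbours shared with the rest of `J`
can only be its parent. -/
theorem IsTree.isBergeAcyclic_neighborFinset [Fintype V] (hG : G.IsTree) (I : Finset V) :
    IsBergeAcyclic I (fun v => G.neighborFinset v) := by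
  rintro J - hJ
  obtain ⟨r⟩ := hG.connected.nonempty
  induction J using induction_on_max_value (G.dist r) with
  | empty => simp at hJ
  | insert a s has hmax ih =>
  rcases s.eq_empty_or_nonempty with rfl | hs
  · simp
  have parent : ∀ w ∈ G.neighborFinset a ∩ s.sup (fun v => G.neighborFinset v),
      G.dist r a = G.dist r w + 1 := by
    intro w hw
    simp only [mem_inter, mem_neighborFinset, mem_sup] at hw
    obtain ⟨haw, w', hw', hw'w⟩ := hw
    refine (hG.dist_eq_dist_add_one_of_adj r haw).resolve_right fun hwa => has ?_
    have hw'a := hmax w' hw'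
    have hww' : G.dist r w = G.dist r w' + 1 :=
      (hG.dist_eq_dist_add_one_of_adj r hw'w).resolve_left (by omega)
    exact hG.eq_of_adj_of_dist_eq_add_one r hw'w haw hww' hwa ▸ hw'
  have hshared : (G.neighborFinset a ∩ s.sup (fun v => G.neighborFinset v)).card ≤ 1 :=
    card_le_one.2 fun y hy z hz =>
      hG.eq_of_adj_of_dist_eq_add_one r
        ((mem_neighborFinset _ _ _).1 (mem_inter.1 hy).1).symm
        ((mem_neighborFinset _ _ _).1 (mem_inter.1 hz).1).symm (parent y hy) (parent z hz)
  have hunion := card_union_add_card_inter (G.neighborFinset a)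
    (s.sup (fun v => G.neighborFinset v))
  have := ih hs
  rw [sum_insert has, sup_insert, sup_eq_union, card_insert_of_notMem has]
  dsimp only at this ⊢
  omega

end SimpleGraph

section StableComplex

variable {V : Type} [Fintype V] {G : SimpleGraph V}

lemma mem_stableCx_iff {s : Finset V} : s ∈ stableCx G ↔ IsTDSet G (↑s : Set V)ᶜ := by
  refine ⟨?_, fun h => ⟨_, h, Set.compl_eq_univ_sdiff _ ▸ (compl_compl _).symm⟩⟩
  rintro ⟨D, hD, hsD⟩
  rwa [hsD, ← Set.compl_eq_univ_sdiff, compl_compl]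

lemma stableCx_eq_indepCx :
    stableCx G = indepCx univ (fun v => G.neighborFinset v) univ := by
  ext s
  simp only [mem_stableCx_iff, IsTDSet, nbhd, Set.eq_univ_iff_forall, indepCx,
    subset_univ, mem_univ, true_and, forall_const, not_subset,
    SimpleGraph.mem_neighborFinset, Set.mem_compl_iff, mem_coe]
  exact forall_congr' fun u => ⟨fun ⟨v, hv, huv⟩ => ⟨v, huv.symm, hv⟩,
    fun ⟨v, huv, hv⟩ => ⟨v, hv, huv.symm⟩⟩

lemma isMinTDSet_compl_of_mem_facetsCx {s : Finset V} (hs : s ∈ facetsCx (stableCx G)) :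
    IsMinTDSet G (↑s : Set V)ᶜ := by
  refine ⟨mem_stableCx_iff.1 hs.1, fun S hS hTD => hS.ne ?_⟩
  have hface : Sᶜ.toFinset ∈ stableCx G := by
    rwa [mem_stableCx_iff, Set.coe_toFinset, compl_compl]
  have hsub : s ⊆ Sᶜ.toFinset := by
    rw [← coe_subset, Set.coe_toFinset]
    exact Set.subset_compl_comm.1 hS.subset
  rw [hs.2 _ hface hsub, Set.coe_toFinset, compl_compl]

lemma pureCx_stableCx (h : TDUnmixed G) : PureCx (stableCx G) := by
  have hcard : ∀ s : Finset V, ((↑s : Set V)ᶜ).ncard = Fintype.card V - s.card := fun s => by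
    rw [← coe_compl, Set.ncard_coe_finset, card_compl]
  intro s hs t ht
  have := h _ _ (isMinTDSet_compl_of_mem_facetsCx hs) (isMinTDSet_compl_of_mem_facetsCx ht)
  rw [hcard, hcard] at this
  have := card_le_univ s
  have := card_le_univ t
  omega

end StableComplex

/-- **Theorem**: the stable complex of a finite TD-unmixed tree is a pure vertex
decomposable simplicial complex. -/
theorem stableCx_pure_vertexDecomposable {V : Type} [Fintype V] (G : SimpleGraph V)
    (htree : G.IsTree) (hunm : TDUnmixed G) :
    PureCx (stableCx G) ∧ VertexDecomposable (stableCx G) :=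
  ⟨pureCx_stableCx hunm, stableCx_eq_indepCx (G := G) ▸
    (htree.isBergeAcyclic_neighborFinset _).vertexDecomposable_indepCx
      fun _ _ => subset_univ _⟩
end

section
/- Let T be a finite TD-unmixed balanced tree of height 3, and let r be a vertex of height 3. Then the induced subgraph T∖{r} is a TD-unmixed balanced forest. -/
open scoped Classical

/-!
Deleting `r` changes heights only at its neighbours of degree two: they become leaves, and the
other neighbour of such a vertex has height 1, so the forest stays balanced. Every other vertex
keeps its height, because a descent to a nearest leaf never passes through `r` (heights drop by one
at each step and `r` has the maximal height 3), and a new leaf is reached only through a vertex of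
height 1.

For a component `C` of `T ∖ r`, pick a neighbour `u` of `r` outside `C` and a neighbour `w` of `u`
of height 1. Among the vertices outside `C ∪ {r}` that are not neighbours of `w` other than `u`, a
minimal set `D` totally dominating everything outside `C ∪ {r}` must contain `u`; so `D` also
dominates `r`, and every vertex of `D` has a private neighbour outside `C ∪ {r}` (for `u` it is `w`).
Hence `S ↦ S ∪ D` sends minimal TD-sets of `C` to minimal TD-sets of `T`, and the unmixedness of `T`
forces all of them to have the same size.
-/

open SimpleGraph

section TotalDomination

variable {V : Type} {G : SimpleGraph V}

def TotallyDominates (G : SimpleGraph V) (D Y : Set V) : Prop := ∀ y ∈ Y, ∃ x ∈ D, G.Adj x y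

def HasPrivateNeighborIn (G : SimpleGraph V) (D Y : Set V) : Prop :=
  ∀ x ∈ D, ∃ y ∈ Y, G.Adj x y ∧ ∀ x' ∈ D, G.Adj x' y → x' = x

lemma TotallyDominates.mono {D Y Y' : Set V} (h : TotallyDominates G D Y) (hY : Y' ⊆ Y) :
    TotallyDominates G D Y' :=
  fun y hy => h y (hY hy)

lemma isTDSet_iff_s8 {S : Set V} : IsTDSet G S ↔ TotallyDominates G S Set.univ := by
  simp [IsTDSet, TotallyDominates, nbhd, Set.eq_univ_iff_forall]

lemma isMinTDSet_iff {S : Set V} :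
    IsMinTDSet G S ↔ IsTDSet G S ∧ ∀ x ∈ S, ¬ IsTDSet G (S \ {x}) := by
  refine and_congr_right fun _ =>
    ⟨fun h x hx => h _ (Set.sdiff_singleton_ssubset.mpr hx), fun h S' hS' hTD => ?_⟩
  obtain ⟨x, hxS, hxS'⟩ := Set.exists_of_ssubset hS'
  refine h x hxS (isTDSet_iff_s8.mpr fun y _ => ?_)
  obtain ⟨z, hz, hzy⟩ := isTDSet_iff_s8.mp hTD y trivial
  exact ⟨z, ⟨hS'.1 hz, fun hzx => hxS' (hzx ▸ hz)⟩, hzy⟩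

lemma exists_subset_totallyDominates_hasPrivateNeighborIn [Finite V] {P Y : Set V}
    (hP : TotallyDominates G P Y) :
    ∃ D ⊆ P, TotallyDominates G D Y ∧ HasPrivateNeighborIn G D Y := by
  obtain ⟨D, hDP, hD⟩ := exists_minimal_le_of_wellFoundedLT (TotallyDominates G · Y) P hP
  refine ⟨D, hDP, hD.prop, fun x hx => ?_⟩
  by_contra! hnot
  have hdom : TotallyDominates G (D \ {x}) Y := fun y hy => by
    obtain ⟨x', hx'D, hx'y⟩ := hD.prop y hy
    by_cases hx'x : x' = x
    · obtain ⟨x'', hx''D, hx''y, hx''x⟩ := hnot y hy (hx'x ▸ hx'y)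
      exact ⟨x'', ⟨hx''D, hx''x⟩, hx''y⟩
    · exact ⟨x', ⟨hx'D, hx'x⟩, hx'y⟩
  exact (hD.le_of_le hdom Set.sdiff_subset hx).2 rfl

variable {W : Type} {H : SimpleGraph W}

lemma IsMinTDSet.image_union (f : H ↪g G) {S : Set W} (hS : IsMinTDSet H S) {D R : Set V}
    (hDR : D ⊆ R) (hRf : ∀ y ∈ R, ∀ a, ¬ G.Adj (f a) y)
    (hdom : TotallyDominates G D (Set.range f)ᶜ) (hpriv : HasPrivateNeighborIn G D R) :
    IsMinTDSet G (f '' S ∪ D) := by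
  rw [isMinTDSet_iff] at hS ⊢
  refine ⟨isTDSet_iff_s8.mpr fun y _ => ?_, ?_⟩
  · by_cases hy : y ∈ Set.range f
    · obtain ⟨a, rfl⟩ := hy
      obtain ⟨s, hs, hsa⟩ := isTDSet_iff_s8.mp hS.1 a trivial
      exact ⟨f s, .inl ⟨s, hs, rfl⟩, f.map_rel_iff.mpr hsa⟩
    · obtain ⟨x, hx, hxy⟩ := hdom y hy
      exact ⟨x, .inr hx, hxy⟩
  rintro x (⟨s, hs, rfl⟩ | hx) hTD
  · obtain ⟨a, ha⟩ := by simpa [TotallyDominates, isTDSet_iff_s8] using hS.2 s hs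
    obtain ⟨z, ⟨⟨t, ht, rfl⟩ | hz, hzs⟩, hza⟩ := isTDSet_iff_s8.mp hTD (f a) trivial
    · exact ha t ht (fun hts => hzs (hts ▸ rfl)) (f.map_rel_iff.mp hza)
    · exact hRf _ (hDR hz) a hza.symm
  · obtain ⟨y, hyR, -, hy⟩ := hpriv x hx
    obtain ⟨z, ⟨⟨t, -, rfl⟩ | hz, hzx⟩, hzy⟩ := isTDSet_iff_s8.mp hTD y trivial
    · exact hRf y hyR t hzy
    · exact hzx (hy z hz hzy)

lemma TDUnmixed.of_embedding [Finite V] (hG : TDUnmixed G) (f : H ↪g G) {D R : Set V}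
    (hDR : D ⊆ R) (hRf : ∀ y ∈ R, ∀ a, ¬ G.Adj (f a) y) (hDf : Disjoint D (Set.range f))
    (hdom : TotallyDominates G D (Set.range f)ᶜ) (hpriv : HasPrivateNeighborIn G D R) :
    TDUnmixed H := by
  intro A B hA hB
  have hcard := hG _ _ (hA.image_union f hDR hRf hdom hpriv) (hB.image_union f hDR hRf hdom hpriv)
  have hdisj (S : Set W) : Disjoint (f '' S) D := hDf.symm.mono_left (Set.image_subset_range f S)
  rw [Set.ncard_union_eq (hdisj A), Set.ncard_union_eq (hdisj B),
    Set.ncard_image_of_injective _ f.injective, Set.ncard_image_of_injective _ f.injective] at hcard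
  omega

end TotalDomination

section Height

variable {V : Type} {G : SimpleGraph V}

def ReachesLeaf (G : SimpleGraph V) (v : V) : Prop := ∃ l, IsLeafVx G l ∧ G.Reachable v l

lemma ReachesLeaf.of_reachable {v w : V} (hw : ReachesLeaf G w) (h : G.Reachable v w) :
    ReachesLeaf G v :=
  let ⟨l, hl, hwl⟩ := hw; ⟨l, hl, h.trans hwl⟩

lemma IsLeafVx.exists_adj {l : V} (hl : IsLeafVx G l) : ∃ z, G.Adj l z :=
  let ⟨z, hz⟩ := Set.ncard_eq_one.mp hl; ⟨z, (hz.symm ▸ rfl : z ∈ G.neighborSet l)⟩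

lemma IsLeafVx.eq_of_adj {l a b : V} (hl : IsLeafVx G l) (ha : G.Adj l a) (hb : G.Adj l b) :
    a = b := by
  obtain ⟨z, hz⟩ := Set.ncard_eq_one.mp hl
  have ha' : a ∈ G.neighborSet l := ha
  have hb' : b ∈ G.neighborSet l := hb
  rw [hz] at ha' hb'
  exact ha'.trans hb'.symm

lemma isLeafVx_of_forall_adj_eq {v z : V} (hvz : G.Adj v z) (h : ∀ y, G.Adj v y → y = z) :
    IsLeafVx G v := by
  have : G.neighborSet v = {z} := Set.ext fun y => ⟨h y, fun hy => hy ▸ hvz⟩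
  rw [IsLeafVx, this, Set.ncard_singleton]

lemma heightVx_le_dist {v l : V} (hl : IsLeafVx G l) (h : G.Reachable v l) :
    heightVx G v ≤ G.dist v l :=
  Nat.sInf_le ⟨l, hl, h, rfl⟩

lemma heightVx_eq_zero_of_isLeafVx {l : V} (hl : IsLeafVx G l) : heightVx G l = 0 :=
  Nat.le_zero.mp (by simpa using heightVx_le_dist hl (.refl l))

lemma exists_isLeafVx_dist_eq_heightVx {v : V} (h : ReachesLeaf G v) :
    ∃ l, IsLeafVx G l ∧ G.Reachable v l ∧ G.dist v l = heightVx G v :=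
  Nat.sInf_mem (s := {n | ∃ l, IsLeafVx G l ∧ G.Reachable v l ∧ G.dist v l = n})
    (let ⟨l, hl, hvl⟩ := h; ⟨_, l, hl, hvl, rfl⟩)

lemma reachesLeaf_of_heightVx_ne_zero {v : V} (h : heightVx G v ≠ 0) : ReachesLeaf G v := by
  by_contra hv
  refine h (Nat.sInf_eq_zero.mpr (.inr (Set.eq_empty_of_forall_notMem ?_)))
  rintro _ ⟨l, hl, hvl, -⟩
  exact hv ⟨l, hl, hvl⟩

lemma isLeafVx_of_heightVx_eq_zero {v : V} (hv : ReachesLeaf G v) (h : heightVx G v = 0) :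
    IsLeafVx G v := by
  obtain ⟨l, hl, hvl, hd⟩ := exists_isLeafVx_dist_eq_heightVx hv
  rw [h, hvl.dist_eq_zero_iff] at hd
  exact hd ▸ hl

lemma heightVx_le_heightVx_add_one {v w : V} (hvw : G.Adj v w) :
    heightVx G v ≤ heightVx G w + 1 := by
  by_cases hw : ReachesLeaf G w
  · obtain ⟨l, hl, hwl, hd⟩ := exists_isLeafVx_dist_eq_heightVx hw
    obtain ⟨p, hp⟩ := hwl.exists_walk_length_eq_dist
    calc heightVx G v ≤ G.dist v l := heightVx_le_dist hl (hvw.reachable.trans hwl)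
      _ ≤ (Walk.cons hvw p).length := dist_le _
      _ = heightVx G w + 1 := by rw [Walk.length_cons, hp, hd]
  · have : heightVx G v = 0 := by
      by_contra hv
      exact hw ((reachesLeaf_of_heightVx_ne_zero hv).of_reachable hvw.reachable.symm)
    omega

lemma exists_adj_heightVx_eq {v : V} {n : ℕ} (h : heightVx G v = n + 1) :
    ∃ w, G.Adj v w ∧ heightVx G w = n := by
  obtain ⟨l, hl, hvl, hd⟩ := exists_isLeafVx_dist_eq_heightVx
    (reachesLeaf_of_heightVx_ne_zero (G := G) (v := v) (by omega))
  obtain ⟨p, hp⟩ := hvl.exists_walk_length_eq_dist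
  cases p with
  | nil => simp [h] at hd
  | @cons _ w _ hvw q =>
    have hq : q.length = n := by simp only [Walk.length_cons] at hp; omega
    have hle := heightVx_le_heightVx_add_one hvw
    have hge := (heightVx_le_dist hl q.reachable).trans (hq ▸ dist_le q)
    exact ⟨w, hvw, by omega⟩

lemma heightVx_le_heightGr [Finite V] (v : V) : heightVx G v ≤ heightGr G :=
  le_csSup (Set.finite_range _).bddAbove (Set.mem_range_self v)

lemma exists_adj_adj_ne_of_heightVx_ne_zero [Finite V] {v : V} (h : heightVx G v ≠ 0) :
    ∃ a b, G.Adj v a ∧ G.Adj v b ∧ a ≠ b := by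
  obtain ⟨a, hva, -⟩ := exists_adj_heightVx_eq (Nat.succ_pred_eq_of_ne_zero h).symm
  have hpos : 0 < (G.neighborSet v).ncard := (Set.ncard_pos (Set.toFinite _)).mpr ⟨a, hva⟩
  have hne : (G.neighborSet v).ncard ≠ 1 := fun hl => h (heightVx_eq_zero_of_isLeafVx hl)
  exact (Set.one_lt_ncard_iff (Set.toFinite (G.neighborSet v))).mp (by omega)

lemma IsBalanced.heightVx_eq_add_one_or (hbal : IsBalanced G) {v w : V} (hvw : G.Adj v w) :
    heightVx G v = heightVx G w + 1 ∨ heightVx G w = heightVx G v + 1 := by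
  have := heightVx_le_heightVx_add_one hvw
  have := heightVx_le_heightVx_add_one hvw.symm
  have := hbal v w hvw
  omega

lemma IsBalanced.heightVx_eq_one_of_isLeafVx (hbal : IsBalanced G) {l z : V}
    (hl : IsLeafVx G l) (hlz : G.Adj l z) : heightVx G z = 1 := by
  have := hbal.heightVx_eq_add_one_or hlz
  rw [heightVx_eq_zero_of_isLeafVx hl] at this
  omega

end Height

section DeleteVertex

variable {V : Type} {G : SimpleGraph V} {r : V}

def IsNewLeaf (G : SimpleGraph V) (r : V) (v : ↥{x | x ≠ r}) : Prop :=
  IsLeafVx (G.induce {x | x ≠ r}) v ∧ G.Adj v r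

lemma isLeafVx_induce_iff {s : Set V} {v : s} (hv : G.neighborSet v ⊆ s) :
    IsLeafVx (G.induce s) v ↔ IsLeafVx G v := by
  have : G.neighborSet v = Subtype.val '' (G.induce s).neighborSet v := by
    ext y
    exact ⟨fun hy => ⟨⟨y, hv hy⟩, hy, rfl⟩, by rintro ⟨y, hy, rfl⟩; exact hy⟩
  rw [IsLeafVx, IsLeafVx, this, Set.ncard_image_of_injective _ Subtype.val_injective]

lemma IsBalanced.heightVx_eq_two_of_adj (hbal : IsBalanced G) (hmax : ∀ v, heightVx G v ≤ 3)
    (hr : heightVx G r = 3) {u : V} (hru : G.Adj r u) : heightVx G u = 2 := by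
  have := hbal.heightVx_eq_add_one_or hru
  have := hmax u
  omega

lemma IsBalanced.not_adj_of_isLeafVx (hbal : IsBalanced G) (hr : heightVx G r = 3) {l : V}
    (hl : IsLeafVx G l) : ¬ G.Adj l r := fun hlr => by
  have := hbal.heightVx_eq_one_of_isLeafVx hl hlr
  omega

lemma exists_adj_ne (hreach : ∀ v, ReachesLeaf G v) (hbal : IsBalanced G)
    (hmax : ∀ v, heightVx G v ≤ 3) (hr : heightVx G r = 3) (y : V) : ∃ z, G.Adj y z ∧ z ≠ r := by
  by_cases hy : heightVx G y = 0
  · have hl := isLeafVx_of_heightVx_eq_zero (hreach y) hy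
    obtain ⟨z, hyz⟩ := hl.exists_adj
    exact ⟨z, hyz, fun hzr => hbal.not_adj_of_isLeafVx hr hl (hzr ▸ hyz)⟩
  · obtain ⟨z, hyz, hz⟩ := exists_adj_heightVx_eq (G := G) (v := y) (n := heightVx G y - 1) (by omega)
    refine ⟨z, hyz, ?_⟩
    rintro rfl
    have := hmax y
    omega

lemma reachesLeaf_induce_and_heightVx_induce_le (hreach : ∀ v, ReachesLeaf G v)
    (hbal : IsBalanced G) (hmax : ∀ v, heightVx G v ≤ 3) (hr : heightVx G r = 3)
    (v : ↥{x | x ≠ r}) :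
    ReachesLeaf (G.induce {x | x ≠ r}) v ∧ heightVx (G.induce {x | x ≠ r}) v ≤ heightVx G v := by
  induction hn : heightVx G v generalizing v with
  | zero =>
    have hl := isLeafVx_of_heightVx_eq_zero (hreach v) hn
    have hl' : IsLeafVx (G.induce {x | x ≠ r}) v :=
      (isLeafVx_induce_iff fun y hy => by
        rintro rfl
        exact hbal.not_adj_of_isLeafVx hr hl hy).mpr hl
    exact ⟨⟨v, hl', .refl _⟩, (heightVx_eq_zero_of_isLeafVx hl').le⟩
  | succ n ih =>
    obtain ⟨w, hvw, hw⟩ := exists_adj_heightVx_eq hn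
    have hwr : w ≠ r := by
      rintro rfl
      have := hmax v
      omega
    have hvw' : (G.induce {x | x ≠ r}).Adj v ⟨w, hwr⟩ := hvw
    obtain ⟨hwleaf, hwle⟩ := ih ⟨w, hwr⟩ hw
    exact ⟨hwleaf.of_reachable hvw'.reachable, (heightVx_le_heightVx_add_one hvw').trans (by omega)⟩

lemma IsNewLeaf.heightVx_eq_one_of_adj (hbal : IsBalanced G)
    (hmax : ∀ v, heightVx G v ≤ 3) (hr : heightVx G r = 3) {v w : ↥{x | x ≠ r}}
    (hv : IsNewLeaf G r v) (hvw : (G.induce {x | x ≠ r}).Adj v w) : heightVx G w = 1 := by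
  obtain ⟨hl, hvr⟩ := hv
  obtain ⟨z, hvz, hz⟩ :=
    exists_adj_heightVx_eq (hbal.heightVx_eq_two_of_adj hmax hr hvr.symm : heightVx G v = 1 + 1)
  have hzr : z ≠ r := by
    rintro rfl
    omega
  have : (⟨z, hzr⟩ : ↥{x | x ≠ r}) = w := hl.eq_of_adj hvz hvw
  rw [← this, hz]

lemma heightVx_le_heightVx_induce (hreach : ∀ v, ReachesLeaf G v) (hbal : IsBalanced G)
    (hmax : ∀ v, heightVx G v ≤ 3) (hr : heightVx G r = 3) (v : ↥{x | x ≠ r})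
    (hv : ¬ IsNewLeaf G r v) :
    heightVx G v ≤ heightVx (G.induce {x | x ≠ r}) v := by
  induction hm : heightVx (G.induce {x | x ≠ r}) v generalizing v with
  | zero =>
    have hl := isLeafVx_of_heightVx_eq_zero
      (reachesLeaf_induce_and_heightVx_induce_le hreach hbal hmax hr v).1 hm
    have hvr : ¬ G.Adj v r := fun h => hv ⟨hl, h⟩
    have hGl : IsLeafVx G v := (isLeafVx_induce_iff fun y hy => by
      rintro rfl
      exact hvr hy).mp hl
    rw [heightVx_eq_zero_of_isLeafVx hGl]
  | succ m ih =>
    obtain ⟨w, hvw, hw⟩ := exists_adj_heightVx_eq hm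
    have hle := heightVx_le_heightVx_add_one (G := G) (v := v) (w := w) hvw
    by_cases hnew : IsNewLeaf G r w
    · have := hnew.heightVx_eq_one_of_adj hbal hmax hr hvw.symm
      omega
    · have := ih w hnew hw
      omega

lemma heightVx_induce_eq (hreach : ∀ v, ReachesLeaf G v) (hbal : IsBalanced G)
    (hmax : ∀ v, heightVx G v ≤ 3) (hr : heightVx G r = 3) (v : ↥{x | x ≠ r})
    (hv : ¬ IsNewLeaf G r v) :
    heightVx (G.induce {x | x ≠ r}) v = heightVx G v :=
  le_antisymm (reachesLeaf_induce_and_heightVx_induce_le hreach hbal hmax hr v).2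
    (heightVx_le_heightVx_induce hreach hbal hmax hr v hv)

lemma isBalanced_induce_ne (hreach : ∀ v, ReachesLeaf G v) (hbal : IsBalanced G)
    (hmax : ∀ v, heightVx G v ≤ 3) (hr : heightVx G r = 3) :
    IsBalanced (G.induce {x | x ≠ r}) := by
  have hnew : ∀ x y, (G.induce {x | x ≠ r}).Adj x y → IsNewLeaf G r x →
      heightVx (G.induce {x | x ≠ r}) x ≠ heightVx (G.induce {x | x ≠ r}) y := by
    intro x y hxy hx
    rw [heightVx_eq_zero_of_isLeafVx hx.1]
    by_cases hy : IsNewLeaf G r y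
    · exact absurd ((hbal.heightVx_eq_two_of_adj hmax hr hx.2.symm).trans
        (hbal.heightVx_eq_two_of_adj hmax hr hy.2.symm).symm) (hbal _ _ hxy)
    · rw [heightVx_induce_eq hreach hbal hmax hr y hy,
        hx.heightVx_eq_one_of_adj hbal hmax hr hxy]
      decide
  intro x y hxy
  by_cases hx : IsNewLeaf G r x
  · exact hnew x y hxy hx
  by_cases hy : IsNewLeaf G r y
  · exact (hnew y x hxy.symm hy).symm
  rw [heightVx_induce_eq hreach hbal hmax hr x hx, heightVx_induce_eq hreach hbal hmax hr y hy]
  exact hbal _ _ hxy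

end DeleteVertex

namespace SimpleGraph

variable {V : Type} {G : SimpleGraph V}

lemma IsAcyclic.eq_of_adj_of_adj (hG : G.IsAcyclic) {a b x₁ x₂ : V} (hab : a ≠ b)
    (ha₁ : G.Adj a x₁) (h₁b : G.Adj x₁ b) (ha₂ : G.Adj a x₂) (h₂b : G.Adj x₂ b) : x₁ = x₂ := by
  have hpath {x : V} (hax : G.Adj a x) (hxb : G.Adj x b) : (Walk.cons hax hxb.toWalk).IsPath := by
    simp [Walk.isPath_def, hax.ne, hxb.ne, hab]
  have := (hG.subsingleton_path a b).elim ⟨_, hpath ha₁ h₁b⟩ ⟨_, hpath ha₂ h₂b⟩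
  simpa using congrArg (fun p : G.Path a b => p.1.snd) this

lemma IsAcyclic.not_reachable_induce_ne (hG : G.IsAcyclic) {r u₁ u₂ : V} (hr₁ : G.Adj r u₁)
    (hr₂ : G.Adj r u₂) (hne : u₁ ≠ u₂) :
    ¬ (G.induce {x | x ≠ r}).Reachable ⟨u₁, hr₁.ne'⟩ ⟨u₂, hr₂.ne'⟩ := by
  rintro ⟨q⟩
  let p := (q.map (Embedding.induce {x | x ≠ r}).toHom).toPath
  have hp : r ∉ p.1.support := fun hr => by
    have hr' := Walk.support_toPath_subset_support _ hr
    rw [Walk.support_map, List.mem_map] at hr'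
    obtain ⟨y, -, hy⟩ := hr'
    exact y.2 hy
  have hpath : (Walk.cons hr₁.symm hr₂.toWalk).IsPath := by
    simp [Walk.isPath_def, hr₁.ne', hr₂.ne, hne]
  have := (hG.subsingleton_path u₁ u₂).elim p ⟨_, hpath⟩
  exact hp (this ▸ by simp)

end SimpleGraph

section ComponentsOfDeletion

variable {V : Type} {G : SimpleGraph V} {r : V}

lemma totallyDominates_of_heightVx_eq_one (hG : G.IsAcyclic) (hreach : ∀ v, ReachesLeaf G v)
    (hbal : IsBalanced G) (hmax : ∀ v, heightVx G v ≤ 3) (hr : heightVx G r = 3) {R : Set V}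
    (hR : ∀ y ∈ R, ∀ z, G.Adj y z → z = r ∨ z ∈ R) {u w : V} (huR : u ∈ R) (huw : G.Adj u w)
    (hw : heightVx G w = 1) :
    TotallyDominates G {x ∈ R | G.Adj w x → x = u} R := by
  intro y hy
  by_contra! hcon
  -- Then all neighbours of `y` except `r` are neighbours of `w`; acyclicity leaves only one, `z`,
  -- of height 0 or 2, and neither height fits next to `y`.
  have hnbr : ∀ z ∈ R, G.Adj y z → G.Adj w z ∧ z ≠ u := fun z hzR hyz => by
    by_contra! h
    exact hcon z ⟨hzR, h⟩ hyz.symm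
  have hnbr' (z : V) (hyz : G.Adj y z) (hzr : z ≠ r) : G.Adj w z :=
    (hnbr z ((hR y hy z hyz).resolve_left hzr) hyz).1
  have hyw : y ≠ w := by
    rintro rfl
    exact (hnbr u huR huw.symm).2 rfl
  obtain ⟨z, hyz, hzr⟩ := exists_adj_ne hreach hbal hmax hr y
  have hwz := hnbr' z hyz hzr
  rcases hbal.heightVx_eq_add_one_or hwz with hz | hz
  · exact hyw ((isLeafVx_of_heightVx_eq_zero (hreach z) (by omega)).eq_of_adj hyz.symm hwz.symm)
  have hyleaf : ¬ G.Adj y r → IsLeafVx G y := fun hyr =>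
    isLeafVx_of_forall_adj_eq hyz fun z' hyz' =>
      hG.eq_of_adj_of_adj hyw hyz' (hnbr' z' hyz' (by rintro rfl; exact hyr hyz')).symm hyz hwz.symm
  by_cases hyr : G.Adj y r
  · exact hbal y z hyz (by rw [hbal.heightVx_eq_two_of_adj hmax hr hyr.symm]; omega)
  · have := hbal.heightVx_eq_one_of_isLeafVx (hyleaf hyr) hyz
    omega

lemma exists_totallyDominates_insert_hasPrivateNeighborIn [Finite V] (hG : G.IsAcyclic)
    (hreach : ∀ v, ReachesLeaf G v) (hbal : IsBalanced G) (hmax : ∀ v, heightVx G v ≤ 3)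
    (hr : heightVx G r = 3) {R : Set V} (hR : ∀ y ∈ R, ∀ z, G.Adj y z → z = r ∨ z ∈ R) {u : V}
    (hru : G.Adj r u) (huR : u ∈ R) :
    ∃ D ⊆ R, TotallyDominates G D (insert r R) ∧ HasPrivateNeighborIn G D R := by
  obtain ⟨w, huw, hw⟩ :=
    exists_adj_heightVx_eq (hbal.heightVx_eq_two_of_adj hmax hr hru : heightVx G u = 1 + 1)
  have hwR : w ∈ R := (hR u huR w huw).resolve_left (by rintro rfl; omega)
  obtain ⟨D, hDsub, hdom, hpriv⟩ := exists_subset_totallyDominates_hasPrivateNeighborIn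
    (totallyDominates_of_heightVx_eq_one hG hreach hbal hmax hr hR huR huw hw)
  have huD : u ∈ D := by
    obtain ⟨x, hxD, hxw⟩ := hdom w hwR
    exact (hDsub hxD).2 hxw.symm ▸ hxD
  refine ⟨D, fun x hx => (hDsub hx).1, ?_, hpriv⟩
  rintro y (rfl | hy)
  · exact ⟨u, huD, hru.symm⟩
  · exact hdom y hy

lemma componentwiseTDUnmixed_induce_ne [Finite V] (hG : G.IsAcyclic)
    (hreach : ∀ v, ReachesLeaf G v) (hbal : IsBalanced G) (hmax : ∀ v, heightVx G v ≤ 3)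
    (hr : heightVx G r = 3) (hunm : TDUnmixed G) :
    ComponentwiseTDUnmixed (G.induce {x | x ≠ r}) := by
  intro c
  let f : (G.induce {x | x ≠ r}).induce c.supp ↪g G :=
    (Embedding.induce c.supp).trans (Embedding.induce {x | x ≠ r})
  let R : Set V := {z | z ≠ r ∧ z ∉ Set.range f}
  have hRf : ∀ y ∈ R, ∀ a, ¬ G.Adj (f a) y := fun y hy a hay =>
    hy.2 ⟨⟨⟨y, hy.1⟩, c.mem_supp_of_adj_mem_supp a.2 hay⟩, rfl⟩
  have hR : ∀ y ∈ R, ∀ z, G.Adj y z → z = r ∨ z ∈ R := fun y hy z hyz => by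
    by_cases hzr : z = r
    · exact .inl hzr
    · exact .inr ⟨hzr, fun ⟨a, ha⟩ => hRf y hy a (ha ▸ hyz.symm)⟩
  obtain ⟨u₁, u₂, hru₁, hru₂, hne⟩ :=
    exists_adj_adj_ne_of_heightVx_ne_zero (G := G) (v := r) (by omega)
  obtain ⟨u, hru, huf⟩ : ∃ u, G.Adj r u ∧ u ∉ Set.range f := by
    by_contra! h
    obtain ⟨a₁, rfl⟩ := h u₁ hru₁
    obtain ⟨a₂, rfl⟩ := h u₂ hru₂
    exact hG.not_reachable_induce_ne hru₁ hru₂ hne (c.reachable_of_mem_supp a₁.2 a₂.2)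
  obtain ⟨D, hDR, hdom, hpriv⟩ := exists_totallyDominates_insert_hasPrivateNeighborIn
    hG hreach hbal hmax hr hR hru ⟨hru.ne', huf⟩
  refine hunm.of_embedding f hDR hRf (Set.disjoint_left.mpr fun x hx => (hDR hx).2)
    (hdom.mono fun y hy => ?_) hpriv
  by_cases hyr : y = r
  · exact .inl hyr
  · exact .inr ⟨hyr, hy⟩

end ComponentsOfDeletion

/-- **Proposition**: if `T` is a finite TD-unmixed balanced tree of height 3 and `r` is a
vertex of height 3, then the induced subgraph `T∖{r}` is a TD-unmixed balanced forest. -/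
theorem delete_height_three_vertex {V : Type} [Fintype V] (G : SimpleGraph V)
    (htree : G.IsTree) (hbal : IsBalanced G) (hunm : TDUnmixed G)
    (hht : heightGr G = 3) (r : V) (hr : heightVx G r = 3) :
    (G.induce {x | x ≠ r}).IsAcyclic ∧ IsBalanced (G.induce {x | x ≠ r}) ∧
      ComponentwiseTDUnmixed (G.induce {x | x ≠ r}) := by
  have hmax (v : V) : heightVx G v ≤ 3 := hht ▸ heightVx_le_heightGr v
  have hreach (v : V) : ReachesLeaf G v :=
    (reachesLeaf_of_heightVx_ne_zero (by omega)).of_reachable (htree.connected v r)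
  exact ⟨htree.isAcyclic.induce _, isBalanced_induce_ne hreach hbal hmax hr,
    componentwiseTDUnmixed_induce_ne htree.isAcyclic hreach hbal hmax hr hunm⟩
end
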